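/- arXiv:2206.00526 — 2 statements merged into one kernel-verified Lean document; each statement's English description precedes it below -/
import Mathlib

section
/- Let W₁ be a closed walk obtained as the arc-disjoint union (after removing opposite arc pairs) of a cycle B with τ(B) = 0 in a residual network N_x and a cycle B' in N_{x+χ^B}. If every cycle of N_x has nonnegative transit time, then B' has nonnegative transit time: indeed, the Eulerian graph induced by the arcs of B and B' (with opposite arcs cancelled) decomposes into cycles of N_x whose transit times sum to τ(B) + τ(B') = τ(B'), and each of these transit times is nonnegative. -/
/-- A chain of arcs from `p` to `q`: each arc's tail matches the current vertex. -/
def ArcChain {W E : Type*} (tl hd : E → W) : W → W → List E → Prop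
  | p, q, [] => p = q
  | p, q, e :: l => tl e = p ∧ ArcChain tl hd (hd e) q l

/-- A network: a directed multigraph with a source, a sink and integral arc capacities. -/
structure Network (V A : Type*) where
  tail : A → V
  head : A → V
  s : V
  t : V
  u : A → ℤ

/-- Transit times extended to residual (backward) arcs by negation. -/
def resTT {A : Type*} (τ : A → ℕ) : A ⊕ A → ℤ :=
  Sum.elim (fun a => (τ a : ℤ)) (fun a => -(τ a : ℤ))

/-- Costs extended to residual (backward) arcs by negation. -/
def resC {A : Type*} (c : A → ℤ) : A ⊕ A → ℤ := Sum.elim c (fun a => -c a)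

/-- The partial (prefix) sums of `g` along a list, starting with `0`. -/
def psums {E : Type*} (g : E → ℤ) : List E → List ℤ
  | [] => [0]
  | e :: l => 0 :: (psums g l).map (fun z => g e + z)

/-- Minimum partial sum (the `0` seed is itself always a partial sum). -/
def hlo {E : Type*} (g : E → ℤ) (l : List E) : ℤ := (psums g l).foldr min 0

/-- Maximum partial sum. -/
def hhi {E : Type*} (g : E → ℤ) (l : List E) : ℤ := (psums g l).foldr max 0

/-- The height of a walk: maximum minus minimum partial sum of transit times. -/
def spreadOf {E : Type*} (g : E → ℤ) (l : List E) : ℤ := hhi g l - hlo g l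

namespace Network
variable {V A : Type*} (N : Network V A)

/-- Tail of a residual arc: `Sum.inl a` is the forward copy of `a`, `Sum.inr a` backward. -/
def resTail : A ⊕ A → V := Sum.elim N.tail N.head

def resHead : A ⊕ A → V := Sum.elim N.head N.tail

/-- Residual capacity of a residual arc with respect to a flow `x`. -/
def resCap (x : A → ℤ) : A ⊕ A → ℤ := Sum.elim (fun a => N.u a - x a) x

/-- A walk in the residual network `N_x`. -/
def IsResWalk (x : A → ℤ) (p q : V) (l : List (A ⊕ A)) : Prop :=
  ArcChain N.resTail N.resHead p q l ∧ ∀ e ∈ l, 0 < N.resCap x e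

/-- A cycle in the residual network `N_x`. -/
def IsResCycle (x : A → ℤ) (p : V) (l : List (A ⊕ A)) : Prop :=
  N.IsResWalk x p p l ∧ l ≠ [] ∧ (l.map N.resHead).Nodup

/-- A feasible static `s`-`t` flow: capacities and conservation at intermediate nodes. -/
def Feasible [Fintype A] [DecidableEq V] (x : A → ℤ) : Prop :=
  (∀ a, 0 ≤ x a ∧ x a ≤ N.u a) ∧
  ∀ v, v ≠ N.s → v ≠ N.t →
    (∑ a : A, if N.head a = v then x a else 0) = (∑ a : A, if N.tail a = v then x a else 0)

/-- The value of a flow: net outflow of the source. -/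
def value [Fintype A] [DecidableEq V] (x : A → ℤ) : ℤ :=
  (∑ a : A, if N.tail a = N.s then x a else 0) - (∑ a : A, if N.head a = N.s then x a else 0)

/-- A maximum `s`-`t` flow: feasible and of maximal value. -/
def IsMaxFlow [Fintype A] [DecidableEq V] (x : A → ℤ) : Prop :=
  N.Feasible x ∧ ∀ y : A → ℤ, N.Feasible y → N.value y ≤ N.value x

/-- Reachability in the residual network `N_x`. -/
def ResReach (x : A → ℤ) : V → V → Prop :=
  Relation.ReflTransGen
    (fun p q => ∃ e : A ⊕ A, 0 < N.resCap x e ∧ N.resTail e = p ∧ N.resHead e = q)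

end Network


/-!
Cancel every arc of `B'` that is not residual for `x` against its reverse, which lies on `B`.
What remains of `B` and `B'` is an Eulerian multiset of arcs of `N_x` whose transit time is
`τ(B) + τ(B') = τ(B')`, since cancelled pairs contribute `0`. An Eulerian multiset splits off
cycles one at a time, and each of them is a cycle of `N_x`, so its transit time is nonnegative.
-/

section Eulerian

variable {W E : Type*} {tl hd : E → W}

theorem ArcChain.append {p q r : W} {l₁ l₂ : List E} (h₁ : ArcChain tl hd p q l₁)
    (h₂ : ArcChain tl hd q r l₂) : ArcChain tl hd p r (l₁ ++ l₂) := by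
  induction l₁ generalizing p with
  | nil => cases h₁; exact h₂
  | cons e l ih => exact ⟨h₁.1, ih h₁.2⟩

theorem ArcChain.of_append_cons {p q : W} {l₁ l₂ : List E} {e : E}
    (h : ArcChain tl hd p q (l₁ ++ e :: l₂)) : ArcChain tl hd (hd e) q l₂ := by
  induction l₁ generalizing p with
  | nil => exact h.2
  | cons f l ih => exact ih h.2

theorem ArcChain.singleton (e : E) : ArcChain tl hd (tl e) (hd e) [e] := ⟨rfl, rfl⟩

theorem ArcChain.cons_map_head {p q : W} {l : List E} (h : ArcChain tl hd p q l) :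
    p :: l.map hd = l.map tl ++ [q] := by
  induction l generalizing p with
  | nil => cases h; rfl
  | cons e l ih => simp only [List.map_cons, List.cons_append, ih h.2, h.1]

/-- In-degree equals out-degree at every vertex. -/
def IsEulerian (tl hd : E → W) (M : Multiset E) : Prop := M.map hd = M.map tl

theorem ArcChain.isEulerian {p : W} {l : List E} (h : ArcChain tl hd p p l) :
    IsEulerian tl hd (l : Multiset E) := by
  have hp : (p :: l.map hd).Perm (p :: l.map tl) :=
    h.cons_map_head ▸ List.perm_append_singleton p (l.map tl)
  simpa [IsEulerian] using Multiset.coe_eq_coe.2 ((List.perm_cons p).1 hp)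

theorem IsEulerian.add {M₁ M₂ : Multiset E} (h₁ : IsEulerian tl hd M₁)
    (h₂ : IsEulerian tl hd M₂) : IsEulerian tl hd (M₁ + M₂) := by
  rw [IsEulerian, Multiset.map_add, Multiset.map_add, h₁, h₂]

theorem IsEulerian.right_of_add {M₁ M₂ : Multiset E} (h : IsEulerian tl hd (M₁ + M₂))
    (h₁ : IsEulerian tl hd M₁) : IsEulerian tl hd M₂ := by
  rw [IsEulerian, Multiset.map_add, Multiset.map_add, h₁] at h
  exact add_left_cancel h

theorem coe_le_of_nodup_map {M : Multiset E} {l : List E} (hnd : (l.map hd).Nodup)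
    (hlM : ∀ e ∈ l, e ∈ M) : (l : Multiset E) ≤ M :=
  (Multiset.le_iff_subset (Multiset.coe_nodup.2 (hnd.of_map hd))).2 hlM

/-- Extend a walk with distinct heads inside `M` until it revisits a vertex; the tail of the
walk from that vertex on is a cycle. Eulerianity supplies the next arc. -/
theorem IsEulerian.exists_cycle_of_walk {M : Multiset E} (hM : IsEulerian tl hd M)
    {p q : W} {l : List E} (hl : ArcChain tl hd p q l) (hnd : (l.map hd).Nodup)
    (hlM : ∀ e ∈ l, e ∈ M) (hq : q ∈ M.map tl) :
    ∃ r c, ArcChain tl hd r r c ∧ c ≠ [] ∧ (c.map hd).Nodup ∧ (c : Multiset E) ≤ M := by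
  obtain ⟨e, heM, rfl⟩ := Multiset.mem_map.1 hq
  by_cases hw : hd e ∈ l.map hd
  · obtain ⟨f, hf, hfe⟩ := List.mem_map.1 hw
    obtain ⟨l₁, l₂, rfl⟩ := List.append_of_mem hf
    have hc : ArcChain tl hd (hd e) (hd e) (l₂ ++ [e]) := by
      have hl₂ := hl.of_append_cons
      rw [hfe] at hl₂
      exact hl₂.append (.singleton e)
    have hcnd : ((l₂ ++ [e]).map hd).Nodup := by
      rw [List.map_append, List.map_cons] at hnd
      rw [List.map_append, List.nodup_append_comm, List.map_singleton, List.singleton_append,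
        ← hfe]
      exact hnd.of_append_right
    refine ⟨hd e, l₂ ++ [e], hc, by simp, hcnd, coe_le_of_nodup_map hcnd ?_⟩
    exact List.forall_mem_append.2 ⟨fun g hg => hlM g (by simp [hg]), by simpa using heM⟩
  · have hnd' : ((l ++ [e]).map hd).Nodup := by
      rw [List.map_append, List.nodup_append_comm, List.map_singleton, List.singleton_append]
      exact List.nodup_cons.2 ⟨hw, hnd⟩
    have hlM' : ∀ g ∈ l ++ [e], g ∈ M := List.forall_mem_append.2 ⟨hlM, by simpa using heM⟩
    have hlen : l.length < Multiset.card M := by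
      simpa using Multiset.card_le_card (coe_le_of_nodup_map hnd' hlM')
    exact hM.exists_cycle_of_walk (hl.append (.singleton e)) hnd' hlM'
      (hM ▸ Multiset.mem_map_of_mem hd heM)
termination_by Multiset.card M - l.length
decreasing_by simp; omega

theorem IsEulerian.exists_cycle {M : Multiset E} (hM : IsEulerian tl hd M) (hne : M ≠ 0) :
    ∃ r c, ArcChain tl hd r r c ∧ c ≠ [] ∧ (c.map hd).Nodup ∧ (c : Multiset E) ≤ M := by
  obtain ⟨e, he⟩ := Multiset.exists_mem_of_ne_zero hne
  exact hM.exists_cycle_of_walk (p := tl e) (l := []) rfl List.nodup_nil (by simp)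
    (Multiset.mem_map_of_mem tl he)

theorem IsEulerian.sum_map_nonneg {β : Type*} [AddCommMonoid β] [PartialOrder β]
    [IsOrderedAddMonoid β] {g : E → β} {M : Multiset E} (hM : IsEulerian tl hd M)
    (hcyc : ∀ r c, ArcChain tl hd r r c → c ≠ [] → (c.map hd).Nodup →
      (c : Multiset E) ≤ M → 0 ≤ (c.map g).sum) :
    0 ≤ (M.map g).sum := by
  induction M using Multiset.strongInductionOn with
  | ih M ih =>
  rcases eq_or_ne M 0 with rfl | hne
  · simp
  obtain ⟨r, c, hc, hcne, hcnd, hcM⟩ := hM.exists_cycle hne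
  obtain ⟨R, rfl⟩ := exists_add_of_le hcM
  have hRlt : R < c + R := lt_add_of_pos_left R (by simpa [pos_iff_ne_zero] using hcne)
  rw [Multiset.map_add, Multiset.sum_add]
  exact add_nonneg (hcyc r c hc hcne hcnd hcM) (ih R hRlt (hM.right_of_add hc.isEulerian)
    fun r' c' hc' hne' hnd' hle => hcyc r' c' hc' hne' hnd' (hle.trans le_add_self))

end Eulerian

/-- `List.count` on `A ⊕ A` goes through the `BEq` instance of `Sum`, which the library does not
know to be lawful. -/
instance Sum.instLawfulBEq {α β : Type*} [BEq α] [BEq β] [LawfulBEq α] [LawfulBEq β] :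
    LawfulBEq (α ⊕ β) where
  eq_of_beq {a b} h := by
    cases a <;> cases b <;> first | exact congrArg _ (eq_of_beq h) | cases h
  rfl {a} := by cases a with | inl a | inr a => exact beq_self_eq_true a

/-- The flow `x + χ^B`. -/
def augmentAlong {A : Type*} [DecidableEq A] (x : A → ℤ) (B : List (A ⊕ A)) : A → ℤ :=
  fun a => x a + ((B.count (Sum.inl a) : ℤ) - (B.count (Sum.inr a) : ℤ))

theorem resTT_swap {A : Type*} (τ : A → ℕ) (e : A ⊕ A) : resTT τ e.swap = -resTT τ e := by
  cases e <;> simp [resTT]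

namespace Network

variable {V A : Type*} (N : Network V A)

theorem resHead_swap (e : A ⊕ A) : N.resHead e.swap = N.resTail e := by cases e <;> rfl

theorem resTail_swap (e : A ⊕ A) : N.resTail e.swap = N.resHead e := by cases e <;> rfl

theorem isEulerian_map_swap_add (S : Multiset (A ⊕ A)) :
    IsEulerian N.resTail N.resHead (S.map Sum.swap + S) := by
  simp only [IsEulerian, Multiset.map_add, Multiset.map_map, Function.comp_def, resHead_swap,
    resTail_swap]
  exact add_comm _ _

theorem swap_mem_of_resCap_augmentAlong_pos [DecidableEq A] {x : A → ℤ} {B : List (A ⊕ A)}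
    {e : A ⊕ A} (h : 0 < N.resCap (augmentAlong x B) e) (hx : ¬0 < N.resCap x e) :
    e.swap ∈ B := by
  cases e with
  | inl a =>
    simp only [resCap, augmentAlong, Sum.elim_inl] at h hx
    exact List.count_pos_iff.1 (show 0 < B.count (Sum.inr a) by omega)
  | inr a =>
    simp only [resCap, augmentAlong, Sum.elim_inr] at h hx
    exact List.count_pos_iff.1 (show 0 < B.count (Sum.inl a) by omega)

theorem exists_isEulerian_of_augmentAlong [DecidableEq A] (τ : A → ℕ) {x : A → ℤ} {p p' : V}
    {B B' : List (A ⊕ A)} (hB : N.IsResWalk x p p B)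
    (hB' : N.IsResCycle (augmentAlong x B) p' B') :
    ∃ M : Multiset (A ⊕ A), IsEulerian N.resTail N.resHead M ∧ (∀ e ∈ M, 0 < N.resCap x e) ∧
      (M.map (resTT τ)).sum = (B.map (resTT τ)).sum + (B'.map (resTT τ)).sum := by
  obtain ⟨hBch, hBcap⟩ := hB
  obtain ⟨⟨hB'ch, hB'cap⟩, -, hB'nd⟩ := hB'
  set S := (B' : Multiset (A ⊕ A)).filter fun e => ¬0 < N.resCap x e
  set T := (B' : Multiset (A ⊕ A)).filter fun e => 0 < N.resCap x e
  have hTS : T + S = B' := Multiset.filter_add_not _ _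
  have hSB : S.map Sum.swap ≤ B := by
    have hSnd : S.Nodup := (Multiset.coe_nodup.2 (hB'nd.of_map _)).filter _
    refine (Multiset.le_iff_subset (hSnd.map (Function.LeftInverse.injective Sum.swap_swap))).2 ?_
    intro e he
    obtain ⟨f, hf, rfl⟩ := Multiset.mem_map.1 he
    obtain ⟨hfB', hfx⟩ := Multiset.mem_filter.1 hf
    exact N.swap_mem_of_resCap_augmentAlong_pos (hB'cap f hfB') hfx
  obtain ⟨D, hD⟩ := exists_add_of_le hSB
  have hsplit : (S.map Sum.swap + S) + (D + T) = B + B' := by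
    rw [hD, ← hTS]; abel
  refine ⟨D + T, ?_, ?_, ?_⟩
  · refine IsEulerian.right_of_add ?_ (N.isEulerian_map_swap_add S)
    rw [hsplit]
    exact hBch.isEulerian.add hB'ch.isEulerian
  · intro e he
    rcases Multiset.mem_add.1 he with he | he
    · exact hBcap e (Multiset.mem_of_le (hD ▸ le_add_self) he)
    · exact (Multiset.mem_filter.1 he).2
  · have hcancel : ((S.map Sum.swap + S).map (resTT τ)).sum = 0 := by
      simp [Multiset.map_map, resTT_swap, Multiset.sum_map_neg]
    have := congrArg (fun M => (M.map (resTT τ)).sum) hsplit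
    simp only [Multiset.map_add, Multiset.sum_add, Multiset.map_coe, Multiset.sum_coe]
      at this hcancel ⊢
    linear_combination this - hcancel

end Network

theorem cycle_after_zero_augmentation_nonneg_transit_general {V A : Type*}
    [DecidableEq A] (N : Network V A) (τ : A → ℕ)
    (x : A → ℤ)
    (hno : ∀ (q : V) (l : List (A ⊕ A)), N.IsResCycle x q l → 0 ≤ (l.map (resTT τ)).sum)
    (p : V) (B : List (A ⊕ A)) (hB : N.IsResCycle x p B)
    (hτB : (B.map (resTT τ)).sum = 0)
    (p' : V) (B' : List (A ⊕ A))
    (hB' : N.IsResCycle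
      (fun a => x a + ((B.count (Sum.inl a) : ℤ) - (B.count (Sum.inr a) : ℤ))) p' B') :
    0 ≤ (B'.map (resTT τ)).sum := by
  obtain ⟨M, hM, hMcap, hMsum⟩ := N.exists_isEulerian_of_augmentAlong τ hB.1 hB'
  have hMnonneg : 0 ≤ (M.map (resTT τ)).sum :=
    hM.sum_map_nonneg fun r c hc hne hnd hcM => by
      simpa using hno r c ⟨⟨hc, fun e he => hMcap e (Multiset.mem_of_le hcM he)⟩, hne, hnd⟩
  rwa [hMsum, hτB, zero_add] at hMnonneg

/-- If every cycle of the residual network `N_x` has nonnegative transit time, `B` is a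
residual cycle with `τ(B) = 0`, and `B'` is any cycle of the residual network of
`x + χ^B`, then `B'` has nonnegative transit time. -/
theorem cycle_after_zero_augmentation_nonneg_transit {V A : Type*}
    [Fintype A] [DecidableEq V] [DecidableEq A] (N : Network V A) (τ : A → ℕ)
    (x : A → ℤ)
    (hno : ∀ (q : V) (l : List (A ⊕ A)), N.IsResCycle x q l → 0 ≤ (l.map (resTT τ)).sum)
    (p : V) (B : List (A ⊕ A)) (hB : N.IsResCycle x p B)
    (hτB : (B.map (resTT τ)).sum = 0)
    (p' : V) (B' : List (A ⊕ A))
    (hB' : N.IsResCycle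
      (fun a => x a + ((B.count (Sum.inl a) : ℤ) - (B.count (Sum.inr a) : ℤ))) p' B') :
    0 ≤ (B'.map (resTT τ)).sum :=
  cycle_after_zero_augmentation_nonneg_transit_general N τ x hno p B hB hτB p' B' hB'
end

section
/- Let f be a flow over time repeated during [θ₁, θ₂] and let B be a cycle in N_{φ(f)} with τ(B) = 0. Then for each i ∈ {θ₁, ..., θ₂ − h_{φ(f)}(B)}, the lifting C_i := lift(B, i) is a cycle in N^{[θ₁,θ₂]}_f with π(C_i) = B and c(C_i) = c(B), and the cycles C_{θ₁}, ..., C_{θ₂ − h_{φ(f)}(B)} are pairwise arc-disjoint. -/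
/-- A flow over time network: directed multigraph, source, sink, integral capacities and
transit times. -/
structure FOTN (V A : Type*) where
  tail : A → V
  head : A → V
  s : V
  t : V
  u : A → ℤ
  τ : A → ℕ

/-- Base arc of a residual arc. -/
def arcBase {A : Type*} : A ⊕ A → A := Sum.elim id id

/-- Lift a list of residual arcs starting at (integer) time `t`; each arc `e` is assigned
the layer of the copy it traverses, i.e. the smaller of its two endpoint times. -/
def liftFrom {E : Type*} (g : E → ℤ) : ℤ → List E → List (E × ℕ)
  | _, [] => []
  | t, e :: l => (e, (t + min 0 (g e)).toNat) :: liftFrom g (t + g e) l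

/-- The lifting of a walk to layer `θ'`: start at time `max θ' (θ' - h⁻)`. -/
def liftW {E : Type*} (g : E → ℤ) (l : List E) (θ' : ℕ) : List (E × ℕ) :=
  liftFrom g ((θ' : ℤ) - min 0 (hlo g l)) l

namespace FOTN
variable {V A : Type*} (N : FOTN V A)

/-- Tail of a residual arc in the base network. -/
def bTail : A ⊕ A → V := Sum.elim N.tail N.head

def bHead : A ⊕ A → V := Sum.elim N.head N.tail

/-- Residual capacity in the base network with respect to a static flow `x`. -/
def bCap (x : A → ℤ) : A ⊕ A → ℤ := Sum.elim (fun a => N.u a - x a) x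

/-- A walk in the residual network `N_x` of the base network. -/
def IsResWalk (x : A → ℤ) (p q : V) (l : List (A ⊕ A)) : Prop :=
  ArcChain N.bTail N.bHead p q l ∧ ∀ e ∈ l, 0 < N.bCap x e

/-- A cycle in the residual network `N_x` of the base network. -/
def IsResCycle (x : A → ℤ) (p : V) (l : List (A ⊕ A)) : Prop :=
  N.IsResWalk x p p l ∧ l ≠ [] ∧ (l.map N.bHead).Nodup

/-- Tail of a residual time-expanded arc `(e, ℓ)`: the copy `a^ℓ` of `a` goes from layer
`ℓ` to layer `ℓ + τ(a)`; backward arcs are reversed. -/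
def teTail : (A ⊕ A) × ℕ → V × ℕ
  | (Sum.inl a, ℓ) => (N.tail a, ℓ)
  | (Sum.inr a, ℓ) => (N.head a, ℓ + N.τ a)

def teHead : (A ⊕ A) × ℕ → V × ℕ
  | (Sum.inl a, ℓ) => (N.head a, ℓ + N.τ a)
  | (Sum.inr a, ℓ) => (N.tail a, ℓ)

/-- Residual capacity of a time-expanded residual arc with respect to a flow over time. -/
def teCap (f : A → ℕ → ℤ) : (A ⊕ A) × ℕ → ℤ
  | (Sum.inl a, ℓ) => N.u a - f a ℓ
  | (Sum.inr a, ℓ) => f a ℓ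

/-- The arc lies between layers `θ₁` and `θ₂` of the time-expanded network. -/
def InLayers (θ₁ θ₂ : ℕ) (e : (A ⊕ A) × ℕ) : Prop :=
  θ₁ ≤ e.2 ∧ e.2 + N.τ (arcBase e.1) ≤ θ₂

/-- Membership in the residual time-expanded network `N^{[θ₁,θ₂]}_f`. -/
def InResTEN (f : A → ℕ → ℤ) (θ₁ θ₂ : ℕ) (e : (A ⊕ A) × ℕ) : Prop :=
  0 < N.teCap f e ∧ N.InLayers θ₁ θ₂ e

/-- A walk in the residual time-expanded network `N^{[θ₁,θ₂]}_f`. -/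
def IsTENWalk (f : A → ℕ → ℤ) (θ₁ θ₂ : ℕ) (p q : V × ℕ) (l : List ((A ⊕ A) × ℕ)) : Prop :=
  ArcChain N.teTail N.teHead p q l ∧ ∀ e ∈ l, N.InResTEN f θ₁ θ₂ e

/-- A cycle in the residual time-expanded network `N^{[θ₁,θ₂]}_f`. -/
def IsTENCycle (f : A → ℕ → ℤ) (θ₁ θ₂ : ℕ) (p : V × ℕ) (l : List ((A ⊕ A) × ℕ)) : Prop :=
  N.IsTENWalk f θ₁ θ₂ p p l ∧ l ≠ [] ∧ (l.map N.teHead).Nodup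

/-- A flow over time with time horizon `θ`, as a static flow in the time-expanded
network: capacities, support on the existing copies `a^ℓ`, `ℓ ∈ {1,…,θ-1}`, and flow
conservation at every node other than the super-terminals (i.e. at all `v ≠ s, t`). -/
def IsFlowOverTime [Fintype A] [DecidableEq V] (f : A → ℕ → ℤ) (θ : ℕ) : Prop :=
  (∀ a ℓ, 0 ≤ f a ℓ ∧ f a ℓ ≤ N.u a) ∧
  (∀ a ℓ, ¬(1 ≤ ℓ ∧ ℓ + 1 ≤ θ) → f a ℓ = 0) ∧
  (∀ v, v ≠ N.s → v ≠ N.t → ∀ ℓ : ℕ,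
    (∑ a : A, if N.head a = v then f a (ℓ - N.τ a) else 0) =
    (∑ a : A, if N.tail a = v then f a ℓ else 0))

/-- `f` is repeated during `[θ₁, θ₂]`. -/
def Repeated (_Nw : FOTN V A) (f : A → ℕ → ℤ) (θ₁ θ₂ : ℕ) : Prop :=
  ∀ a : A, ∀ ℓ : ℕ, θ₁ ≤ ℓ → ℓ < θ₂ → f a ℓ = f a (ℓ + 1)

/-- The projection `φ(f)(a) := f(a^{θ₁})`. -/
def proj (_Nw : FOTN V A) (f : A → ℕ → ℤ) (θ₁ : ℕ) : A → ℤ := fun a => f a θ₁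

end FOTN

section PartialSums

variable {E : Type*} (g : E → ℤ)

theorem List.foldr_min_le_of_mem {α : Type*} [LinearOrder α] {L : List α} {b x : α} (h : x ∈ L) : L.foldr min b ≤ x := by
  induction L with
  | nil => simp at h
  | cons a L ih =>
    rcases List.mem_cons.mp h with rfl | h
    · exact min_le_left _ _
    · exact (min_le_right _ _).trans (ih h)

theorem List.le_foldr_max_of_mem {α : Type*} [LinearOrder α] {L : List α} {b x : α} (h : x ∈ L) : x ≤ L.foldr max b := by
  induction L with
  | nil => simp at h
  | cons a L ih =>
    rcases List.mem_cons.mp h with rfl | h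
    · exact le_max_left _ _
    · exact (ih h).trans (le_max_right _ _)

theorem zero_mem_psums (l : List E) : 0 ∈ psums g l := by
  cases l <;> simp [psums]

theorem mem_psums_cons {e : E} {l : List E} {x : ℤ} :
    x ∈ psums g (e :: l) ↔ x = 0 ∨ ∃ s ∈ psums g l, g e + s = x := by
  simp [psums]

theorem hlo_le_of_mem_psums {l : List E} {s : ℤ} (hs : s ∈ psums g l) : hlo g l ≤ s :=
  List.foldr_min_le_of_mem hs

theorem le_hhi_of_mem_psums {l : List E} {s : ℤ} (hs : s ∈ psums g l) : s ≤ hhi g l :=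
  List.le_foldr_max_of_mem hs

theorem hlo_nonpos (l : List E) : hlo g l ≤ 0 :=
  hlo_le_of_mem_psums g (zero_mem_psums g l)

/-- The times visited by the lifting `liftW g l i` are `i - h⁻ + s` for the partial sums `s`. -/
theorem sub_hlo_add_mem_Icc {l : List E} {i lo hi : ℤ} (hlo_i : lo ≤ i)
    (hi_i : i + spreadOf g l ≤ hi) {s : ℤ} (hs : s ∈ psums g l) :
    i - min 0 (hlo g l) + s ∈ Set.Icc lo hi := by
  have hmin : min 0 (hlo g l) = hlo g l := min_eq_right (hlo_nonpos g l)
  have := hlo_le_of_mem_psums g hs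
  have := le_hhi_of_mem_psums g hs
  rw [hmin]
  unfold spreadOf at hi_i
  constructor <;> linarith

end PartialSums

section Lifting

variable {E : Type*} {g : E → ℤ}

theorem map_fst_liftFrom (g : E → ℤ) (t : ℤ) (l : List E) :
    (liftFrom g t l).map Prod.fst = l := by
  induction l generalizing t with
  | nil => rfl
  | cons e l ih => simp [liftFrom, ih]

theorem fst_mem_of_mem_liftFrom {t : ℤ} {l : List E} {x : E × ℕ}
    (hx : x ∈ liftFrom g t l) : x.1 ∈ l := by
  rw [← map_fst_liftFrom g t l]
  exact List.mem_map_of_mem hx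

/-- Each lifted arc `x` is entered at a time `t + s` and left at the time `t + s + g x.1`,
both of which are partial sums shifted by `t`. -/
theorem exists_mem_psums_of_mem_liftFrom {t : ℤ} {l : List E} {x : E × ℕ}
    (hx : x ∈ liftFrom g t l) :
    ∃ s ∈ psums g l, s + g x.1 ∈ psums g l ∧ x.2 = (t + s + min 0 (g x.1)).toNat := by
  induction l generalizing t with
  | nil => simp [liftFrom] at hx
  | cons e l ih =>
    rcases List.mem_cons.mp hx with rfl | hx
    · refine ⟨0, zero_mem_psums g _, ?_, by simp⟩
      exact (mem_psums_cons g).2 (Or.inr ⟨0, zero_mem_psums g l, by simp⟩)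
    · obtain ⟨s, hs, hs', hx2⟩ := ih hx
      refine ⟨g e + s, (mem_psums_cons g).2 (Or.inr ⟨s, hs, rfl⟩),
        (mem_psums_cons g).2 (Or.inr ⟨s + g x.1, hs', by ring⟩), ?_⟩
      rw [hx2, add_assoc t]

theorem liftFrom_disjoint {l : List E} (hl : l.Nodup) {t t' : ℤ} (htt' : t ≠ t')
    (ht : ∀ s ∈ psums g l, 0 ≤ t + s) (ht' : ∀ s ∈ psums g l, 0 ≤ t' + s) :
    (liftFrom g t l).Disjoint (liftFrom g t' l) := by
  induction l generalizing t t' with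
  | nil => simp [liftFrom]
  | cons e l ih =>
    obtain ⟨he, hl⟩ := List.nodup_cons.mp hl
    have shift {u : ℤ} (hu : ∀ s ∈ psums g (e :: l), 0 ≤ u + s) :
        ∀ s ∈ psums g l, 0 ≤ u + g e + s := fun s hs => by
      simpa [add_assoc] using hu _ ((mem_psums_cons g).2 (Or.inr ⟨s, hs, rfl⟩))
    have layer {u : ℤ} (hu : ∀ s ∈ psums g (e :: l), 0 ≤ u + s) : 0 ≤ u + min 0 (g e) := by
      have h0 := hu 0 (zero_mem_psums g _)
      have h1 := shift hu 0 (zero_mem_psums g l)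
      rcases min_choice 0 (g e) with h | h <;> rw [h] <;> linarith
    have not_mem_tail (u : ℤ) (n : ℕ) : (e, n) ∉ liftFrom g u l :=
      fun h => he (fst_mem_of_mem_liftFrom h)
    simp only [liftFrom, List.disjoint_cons_left, List.disjoint_cons_right, List.mem_cons,
      Prod.mk.injEq, true_and, not_or]
    refine ⟨⟨?_, not_mem_tail _ _⟩, not_mem_tail _ _, ih hl (by omega) (shift ht) (shift ht')⟩
    have := layer ht
    have := layer ht'
    omega

end Lifting

namespace FOTN

variable {V A : Type*} (N : FOTN V A)

theorem teTail_lift (e : A ⊕ A) {t : ℤ} (ht : 0 ≤ t + resTT N.τ e) :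
    N.teTail (e, (t + min 0 (resTT N.τ e)).toNat) = (N.bTail e, t.toNat) := by
  rcases e with a | a <;> simp only [resTT, Sum.elim_inl, Sum.elim_inr] at ht ⊢ <;>
    simp only [teTail, bTail, Sum.elim_inl, Sum.elim_inr, Prod.mk.injEq, true_and] <;> omega

theorem teHead_lift (e : A ⊕ A) {t : ℤ} (ht : 0 ≤ t) (ht' : 0 ≤ t + resTT N.τ e) :
    N.teHead (e, (t + min 0 (resTT N.τ e)).toNat) = (N.bHead e, (t + resTT N.τ e).toNat) := by
  rcases e with a | a <;> simp only [resTT, Sum.elim_inl, Sum.elim_inr] at ht' ⊢ <;>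
    simp only [teHead, bHead, Sum.elim_inl, Sum.elim_inr, Prod.mk.injEq, true_and] <;> omega

theorem teHead_fst (x : (A ⊕ A) × ℕ) : (N.teHead x).1 = N.bHead x.1 := by
  obtain ⟨e | e, ℓ⟩ := x <;> rfl

theorem teCap_eq_bCap (f : A → ℕ → ℤ) (e : A ⊕ A) (ℓ : ℕ) :
    N.teCap f (e, ℓ) = N.bCap (fun a => f a ℓ) e := by
  rcases e with a | a <;> rfl

variable {N}

theorem Repeated.eq_proj {f : A → ℕ → ℤ} {θ₁ θ₂ : ℕ} (hrep : N.Repeated f θ₁ θ₂) {ℓ : ℕ}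
    (h₁ : θ₁ ≤ ℓ) (h₂ : ℓ ≤ θ₂) : (fun a => f a ℓ) = N.proj f θ₁ := by
  funext a
  induction ℓ, h₁ using Nat.le_induction with
  | base => rfl
  | succ n hn ih => rw [← hrep a n hn (by omega), ih (by omega)]

theorem inLayers_lift (e : A ⊕ A) {θ₁ θ₂ : ℕ} {t : ℤ} (ht : t ∈ Set.Icc (θ₁ : ℤ) θ₂)
    (ht' : t + resTT N.τ e ∈ Set.Icc (θ₁ : ℤ) θ₂) :
    N.InLayers θ₁ θ₂ (e, (t + min 0 (resTT N.τ e)).toNat) := by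
  obtain ⟨ht₁, ht₂⟩ := ht
  obtain ⟨ht₁', ht₂'⟩ := ht'
  rcases e with a | a <;> simp only [resTT, Sum.elim_inl, Sum.elim_inr] at ht₁' ht₂' ⊢ <;>
    simp only [InLayers, arcBase, Sum.elim_inl, Sum.elim_inr, id] <;> omega

theorem inResTEN_lift {f : A → ℕ → ℤ} {θ₁ θ₂ : ℕ} (hrep : N.Repeated f θ₁ θ₂) {e : A ⊕ A}
    (hcap : 0 < N.bCap (N.proj f θ₁) e) {t : ℤ} (ht : t ∈ Set.Icc (θ₁ : ℤ) θ₂)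
    (ht' : t + resTT N.τ e ∈ Set.Icc (θ₁ : ℤ) θ₂) :
    N.InResTEN f θ₁ θ₂ (e, (t + min 0 (resTT N.τ e)).toNat) := by
  have hlayers := N.inLayers_lift e ht ht'
  refine ⟨?_, hlayers⟩
  rw [teCap_eq_bCap, hrep.eq_proj hlayers.1 (by have := hlayers.2; omega)]
  exact hcap

theorem arcChain_liftFrom {p q : V} {l : List (A ⊕ A)} (hl : ArcChain N.bTail N.bHead p q l)
    {t : ℤ} (ht : ∀ s ∈ psums (resTT N.τ) l, 0 ≤ t + s) :
    ArcChain N.teTail N.teHead (p, t.toNat) (q, (t + (l.map (resTT N.τ)).sum).toNat)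
      (liftFrom (resTT N.τ) t l) := by
  induction l generalizing p t with
  | nil => simpa [ArcChain, liftFrom] using hl
  | cons e l ih =>
    obtain ⟨he, hl⟩ := hl
    have ht₀ : 0 ≤ t := by simpa using ht 0 (zero_mem_psums _ _)
    have ht_next : ∀ s ∈ psums (resTT N.τ) l, 0 ≤ t + resTT N.τ e + s := fun s hs => by
      simpa [add_assoc] using ht _ ((mem_psums_cons _).2 (Or.inr ⟨s, hs, rfl⟩))
    have ht₁ : 0 ≤ t + resTT N.τ e := by simpa using ht_next 0 (zero_mem_psums _ l)
    refine ⟨by rw [N.teTail_lift e ht₁, he], ?_⟩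
    rw [N.teHead_lift e ht₀ ht₁, List.map_cons, List.sum_cons, ← add_assoc]
    exact ih hl ht_next

theorem isTENWalk_liftFrom {f : A → ℕ → ℤ} {θ₁ θ₂ : ℕ} (hrep : N.Repeated f θ₁ θ₂)
    {p q : V} {l : List (A ⊕ A)} (hl : N.IsResWalk (N.proj f θ₁) p q l) {t : ℤ}
    (ht : ∀ s ∈ psums (resTT N.τ) l, t + s ∈ Set.Icc (θ₁ : ℤ) θ₂) :
    N.IsTENWalk f θ₁ θ₂ (p, t.toNat) (q, (t + (l.map (resTT N.τ)).sum).toNat)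
      (liftFrom (resTT N.τ) t l) := by
  refine ⟨arcChain_liftFrom hl.1 fun s hs => by linarith [(ht s hs).1], fun x hx => ?_⟩
  obtain ⟨s, hs, hs', hx2⟩ := exists_mem_psums_of_mem_liftFrom hx
  have hcap := hl.2 x.1 (fst_mem_of_mem_liftFrom hx)
  rw [show x = (x.1, x.2) from rfl, hx2]
  exact inResTEN_lift hrep hcap (ht s hs) (by simpa [add_assoc] using ht _ hs')

theorem IsResCycle.isTENCycle_liftFrom {f : A → ℕ → ℤ} {θ₁ θ₂ : ℕ}
    (hrep : N.Repeated f θ₁ θ₂) {p : V} {B : List (A ⊕ A)}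
    (hB : N.IsResCycle (N.proj f θ₁) p B) (hτB : (B.map (resTT N.τ)).sum = 0) {t : ℤ}
    (ht : ∀ s ∈ psums (resTT N.τ) B, t + s ∈ Set.Icc (θ₁ : ℤ) θ₂) :
    N.IsTENCycle f θ₁ θ₂ (p, t.toNat) (liftFrom (resTT N.τ) t B) := by
  obtain ⟨hwalk, hne, hnodup⟩ := hB
  have hfst := map_fst_liftFrom (resTT N.τ) t B
  refine ⟨by simpa [hτB] using isTENWalk_liftFrom hrep hwalk ht, ?_, ?_⟩
  · rintro h
    exact hne (by rw [← hfst, h, List.map_nil])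
  · have hheads : ((liftFrom (resTT N.τ) t B).map N.teHead).map Prod.fst = B.map N.bHead := by
      conv_rhs => rw [← hfst]
      simp only [List.map_map]
      exact List.map_congr_left fun x _ => N.teHead_fst x
    exact List.Nodup.of_map Prod.fst (hheads ▸ hnodup)

end FOTN

theorem liftings_of_zero_transit_cycle_general {V A : Type*}
    (N : FOTN V A) (c : A → ℤ)
    (f : A → ℕ → ℤ) (θ₁ θ₂ : ℕ)
    (hrep : N.Repeated f θ₁ θ₂)
    (p : V) (B : List (A ⊕ A)) (hB : N.IsResCycle (N.proj f θ₁) p B)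
    (hτB : (B.map (resTT N.τ)).sum = 0) :
    (∀ i : ℕ, θ₁ ≤ i → (i : ℤ) + spreadOf (resTT N.τ) B ≤ θ₂ →
      N.IsTENCycle f θ₁ θ₂
        (p, ((i : ℤ) - min 0 (hlo (resTT N.τ) B)).toNat)
        (liftW (resTT N.τ) B i) ∧
      (liftW (resTT N.τ) B i).map Prod.fst = B ∧
      ((liftW (resTT N.τ) B i).map (fun e => resC c e.1)).sum = (B.map (resC c)).sum) ∧
    (∀ i j : ℕ, θ₁ ≤ i → (i : ℤ) + spreadOf (resTT N.τ) B ≤ θ₂ →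
      θ₁ ≤ j → (j : ℤ) + spreadOf (resTT N.τ) B ≤ θ₂ → i ≠ j →
      ∀ e, e ∈ liftW (resTT N.τ) B i → e ∉ liftW (resTT N.τ) B j) := by
  have hfst (i : ℕ) := map_fst_liftFrom (resTT N.τ) (i - min 0 (hlo (resTT N.τ) B)) B
  have htimes {i : ℕ} (hi₁ : θ₁ ≤ i) (hi₂ : (i : ℤ) + spreadOf (resTT N.τ) B ≤ θ₂) :
      ∀ s ∈ psums (resTT N.τ) B, (i : ℤ) - min 0 (hlo (resTT N.τ) B) + s ∈ Set.Icc (θ₁ : ℤ) θ₂ :=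
    fun _ hs => sub_hlo_add_mem_Icc _ (by exact_mod_cast hi₁) hi₂ hs
  refine ⟨fun i hi₁ hi₂ => ⟨hB.isTENCycle_liftFrom hrep hτB (htimes hi₁ hi₂), hfst i, ?_⟩,
    fun i j hi₁ hi₂ hj₁ hj₂ hij e he he' => ?_⟩
  · conv_rhs => rw [← hfst i]
    simp only [liftW, List.map_map, Function.comp_def]
  · have hBnodup : B.Nodup := List.Nodup.of_map _ hB.2.2
    refine liftFrom_disjoint hBnodup (by omega) (fun s hs => ?_) (fun s hs => ?_) he he'
    · linarith [(htimes hi₁ hi₂ s hs).1]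
    · linarith [(htimes hj₁ hj₂ s hs).1]

/-- For `f` repeated during `[θ₁, θ₂]` and a cycle `B` of `N_{φ(f)}` with `τ(B) = 0`:
each lifting `C_i = lift(B, i)`, `θ₁ ≤ i`, `i + h(B) ≤ θ₂`, is a cycle of
`N^{[θ₁,θ₂]}_f` with `π(C_i) = B` and `c(C_i) = c(B)`, and the liftings are pairwise
arc-disjoint. -/
theorem liftings_of_zero_transit_cycle {V A : Type*}
    [Fintype A] [DecidableEq V] (N : FOTN V A) (c : A → ℤ) (hτ : ∀ a, N.τ a ≤ 1)
    (f : A → ℕ → ℤ) (θ θ₁ θ₂ : ℕ)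
    (hf : N.IsFlowOverTime f θ) (hrep : N.Repeated f θ₁ θ₂)
    (h1 : 1 ≤ θ₁) (h2 : θ₁ + 2 ≤ θ₂) (h3 : θ₂ + 1 ≤ θ)
    (p : V) (B : List (A ⊕ A)) (hB : N.IsResCycle (N.proj f θ₁) p B)
    (hτB : (B.map (resTT N.τ)).sum = 0) :
    (∀ i : ℕ, θ₁ ≤ i → (i : ℤ) + spreadOf (resTT N.τ) B ≤ θ₂ →
      N.IsTENCycle f θ₁ θ₂
        (p, ((i : ℤ) - min 0 (hlo (resTT N.τ) B)).toNat)
        (liftW (resTT N.τ) B i) ∧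
      (liftW (resTT N.τ) B i).map Prod.fst = B ∧
      ((liftW (resTT N.τ) B i).map (fun e => resC c e.1)).sum = (B.map (resC c)).sum) ∧
    (∀ i j : ℕ, θ₁ ≤ i → (i : ℤ) + spreadOf (resTT N.τ) B ≤ θ₂ →
      θ₁ ≤ j → (j : ℤ) + spreadOf (resTT N.τ) B ≤ θ₂ → i ≠ j →
      ∀ e, e ∈ liftW (resTT N.τ) B i → e ∉ liftW (resTT N.τ) B j) :=
  liftings_of_zero_transit_cycle_general N c f θ₁ θ₂ hrep p B hB hτB
end
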